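/- Let σ > 0 and f ∈ L₂(ℝ), and suppose D_{B,σ} ∈ L_∞[−σ,σ]. Then for every bounded measurable set E ⊂ ℝ: ∫_{−σ}^{σ} |∫_E f(t) conj(Φ_{B,σ}(t,y)) dt|² dy ≤ ‖D_{B,σ}‖_{L_∞[−σ,σ]} ∫_ℝ |∫_E f(t) e^{−iyt} dt|² dy. -/

import Mathlib

/-!
Write `F(z) = ∫_E f(t) e^{-izt} dt`. For a.e. `y` the series defining `Φ(·, y)` converges at some
point, hence absolutely in `ν`, and integrating it termwise against `f` over `E` gives
`∫_E f conj Φ(·, y) = ∑_ν conj (B̂(y + 2νσ)) F(y + 2νσ)`. By Cauchy–Schwarz in `ℓ²(ℤ)` its square is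
at most `D_{B,σ}(y) ∑_ν |F(y + 2νσ)|²`, and integrating over `(-σ, σ]` and unfolding the
periodization gives `‖D_{B,σ}‖_∞ ∫_ℝ |F|²`.

The sums `∑_ν |F(y + 2νσ)|²` are bounded uniformly in `y` by Parseval's identity on an interval
`(-R, R]` containing `E`: after modulating `f` by `e^{-iyt}`, the frequencies `y + 2νσ` are among
the Fourier frequencies `πk/R` of that interval. This also makes `∫_ℝ |F|²` finite, so the
right-hand side is a genuine integral and not the junk value of a non-integrable one.
-/

open MeasureTheory Complex Filter Real

noncomputable section

/-- Partial sums `∑_{|j|≤n} β_j B(x - jπ/σ)` of the shift series. -/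
def shiftSum (B : ℝ → ℂ) (σ : ℝ) (β : ℤ → ℂ) (n : ℕ) (x : ℝ) : ℂ :=
  ∑ j ∈ Finset.Icc (-(n : ℤ)) (n : ℤ), β j * B (x - j * π / σ)

/-- Partial sums of the series `(1/(2σ)) ∑_j B(x - jπ/σ) e^{i(jπ/σ)y}` defining `Φ_{B,σ}`. -/
def phiSum (B : ℝ → ℂ) (σ : ℝ) (n : ℕ) (x y : ℝ) : ℂ :=
  ((2 * σ : ℝ) : ℂ)⁻¹ *
    ∑ j ∈ Finset.Icc (-(n : ℤ)) (n : ℤ),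
      B (x - j * π / σ) * Complex.exp (Complex.I * ((j * π / σ) * y))

/-- `Φ` is, for a.e. `x`, the `L₂[-σ,σ]`-limit (in `y`) of the shift series. -/
def IsPhi (B : ℝ → ℂ) (σ : ℝ) (Φ : ℝ → ℝ → ℂ) : Prop :=
  ∀ᵐ x : ℝ, Tendsto (fun n : ℕ => ∫ y in Set.Ioc (-σ) σ, ‖phiSum B σ n x y - Φ x y‖ ^ 2)
    atTop (nhds 0)

/-- `Bhat` is the Plancherel (`L₂`) Fourier transform of `B`, with the normalization
`B̂(y) = (1/(2π)) ∫ B(t) e^{-ity} dt` extended from `L₁ ∩ L₂` to `L₂`. -/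
def IsL2Fourier (B Bhat : ℝ → ℂ) : Prop :=
  MemLp Bhat 2 volume ∧
    Tendsto (fun n : ℕ => ∫ y : ℝ,
      ‖((2 * π : ℝ) : ℂ)⁻¹ *
          (∫ t in (-(n : ℝ))..(n : ℝ), B t * Complex.exp (-Complex.I * (t * y))) - Bhat y‖ ^ 2)
      atTop (nhds 0)

/-- `D_{B,σ}(y) = ∑_ν |B̂(y + 2νσ)|²`. -/
def Dfun (Bhat : ℝ → ℂ) (σ : ℝ) (y : ℝ) : ℝ := ∑' ν : ℤ, ‖Bhat (y + 2 * ν * σ)‖ ^ 2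

/-- Partial sums of the symbol series `∑_j β_j e^{-i(jπ/σ)y}`. -/
def symbSum (σ : ℝ) (β : ℤ → ℂ) (n : ℕ) (y : ℝ) : ℂ :=
  ∑ j ∈ Finset.Icc (-(n : ℤ)) (n : ℤ), β j * Complex.exp (-Complex.I * ((j * π / σ) * y))

/-- The shifts `{B(· - jπ/σ)}_{j∈ℤ}` form a Bessel system with constant `C` in `L₂(ℝ)`. -/
def IsBesselShifts (B : ℝ → ℂ) (σ C : ℝ) : Prop :=
  0 < C ∧ ∀ β : ℤ → ℂ, Summable (fun j => ‖β j‖ ^ 2) →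
    ∃ s : ℝ → ℂ, MemLp s 2 volume ∧
      Tendsto (fun n : ℕ => ∫ x : ℝ, ‖shiftSum B σ β n x - s x‖ ^ 2) atTop (nhds 0) ∧
      (∫ x : ℝ, ‖s x‖ ^ 2) ≤ C * ∑' j : ℤ, ‖β j‖ ^ 2

/-- The shifts `{B(· - jπ/σ)}_{j∈ℤ}` form a Riesz system with constants `A, C` in `L₂(ℝ)`. -/
def IsRieszShifts (B : ℝ → ℂ) (σ A C : ℝ) : Prop :=
  0 < A ∧ 0 < C ∧ ∀ β : ℤ → ℂ, Summable (fun j => ‖β j‖ ^ 2) →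
    ∃ s : ℝ → ℂ, MemLp s 2 volume ∧
      Tendsto (fun n : ℕ => ∫ x : ℝ, ‖shiftSum B σ β n x - s x‖ ^ 2) atTop (nhds 0) ∧
      A * ∑' j : ℤ, ‖β j‖ ^ 2 ≤ (∫ x : ℝ, ‖s x‖ ^ 2) ∧
      (∫ x : ℝ, ‖s x‖ ^ 2) ≤ C * ∑' j : ℤ, ‖β j‖ ^ 2

/-- The space `𝕊_{B,σ,ρ}` of `L₂`-sums of shifts whose symbol vanishes a.e. on `ρ < |y| ≤ σ`. -/
def shiftSpace (B : ℝ → ℂ) (σ ρ : ℝ) : Set (ℝ → ℂ) :=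
  {s | MemLp s 2 volume ∧ ∃ β : ℤ → ℂ, Summable (fun j => ‖β j‖ ^ 2) ∧
    Tendsto (fun n : ℕ => ∫ x : ℝ, ‖shiftSum B σ β n x - s x‖ ^ 2) atTop (nhds 0) ∧
    ∃ ζ : ℝ → ℂ,
      Tendsto (fun n : ℕ => ∫ y in Set.Ioc (-σ) σ, ‖symbSum σ β n y - ζ y‖ ^ 2) atTop (nhds 0) ∧
      ∀ᵐ y : ℝ, ρ < |y| → |y| ≤ σ → ζ y = 0}

/-- `ζf = ζ_{B,σ}(f)`, i.e. `∫_{-n}^{n} f(t) conj(Φ(t,y)) dt → 2π D_{B,σ}(y) ζf(y)` in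
`L₂[-σ,σ]`. -/
def IsZeta (Φ : ℝ → ℝ → ℂ) (Bhat : ℝ → ℂ) (σ : ℝ) (f ζf : ℝ → ℂ) : Prop :=
  MemLp ζf 2 (volume.restrict (Set.Ioc (-σ) σ)) ∧
  Tendsto (fun n : ℕ => ∫ y in Set.Ioc (-σ) σ,
    ‖(∫ t in (-(n : ℝ))..(n : ℝ), f t * (starRingEnd ℂ) (Φ t y))
      - ((2 * π * Dfun Bhat σ y : ℝ) : ℂ) * ζf y‖ ^ 2) atTop (nhds 0)

/-- `Φ` agrees a.e. with the pointwise sum `∑_ν B̂(y+2νσ) e^{i(y+2νσ)x}`. -/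
def IsPhiHat (Bhat : ℝ → ℂ) (σ : ℝ) (Φ : ℝ → ℝ → ℂ) : Prop :=
  ∀ᵐ p : ℝ × ℝ, HasSum (fun ν : ℤ =>
    Bhat (p.2 + 2 * ν * σ) * Complex.exp (Complex.I * ((p.2 + 2 * ν * σ) * p.1))) (Φ p.1 p.2)

open Set
open scoped ComplexConjugate ENNReal

def fourierWrt (μ : Measure ℝ) (f : ℝ → ℂ) (y : ℝ) : ℂ :=
  ∫ t, f t * Complex.exp (-I * (t * y)) ∂μ

lemma norm_exp_neg_I_mul (t y : ℝ) : ‖Complex.exp (-I * (t * y))‖ = 1 := by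
  rw [Complex.norm_exp]; simp

lemma norm_exp_I_mul (t y : ℝ) : ‖Complex.exp (I * (t * y))‖ = 1 := by
  rw [Complex.norm_exp]; simp

lemma conj_exp_I_mul (t y : ℝ) : conj (Complex.exp (I * (t * y))) = Complex.exp (-I * (y * t)) := by
  rw [← Complex.exp_conj]; simp [mul_comm]

lemma integrable_mul_exp {μ : Measure ℝ} {f : ℝ → ℂ} (hf : Integrable f μ) (y : ℝ) :
    Integrable (fun t => f t * Complex.exp (-I * (t * y))) μ :=
  hf.mul_bdd (c := 1) (by fun_prop) (ae_of_all _ fun t => (norm_exp_neg_I_mul t y).le)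

lemma continuous_fourierWrt {μ : Measure ℝ} {f : ℝ → ℂ} (hf : Integrable f μ) :
    Continuous (fourierWrt μ f) :=
  continuous_of_dominated (fun y => (integrable_mul_exp hf y).aestronglyMeasurable)
    (fun y => ae_of_all _ fun t => by rw [norm_mul, norm_exp_neg_I_mul, mul_one]) hf.norm
    (ae_of_all _ fun t => by fun_prop)

lemma summable_norm_of_hasSum_mul_exp {ι : Type*} {b : ι → ℂ} {ω : ι → ℝ} {t : ℝ} {s : ℂ}
    (h : HasSum (fun i => b i * Complex.exp (I * (ω i * t))) s) : Summable fun i => ‖b i‖ :=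
  h.summable.norm.congr fun i => by rw [norm_mul, norm_exp_I_mul, mul_one]

lemma hasSum_integral_mul_conj {ι : Type*} [Countable ι] {μ : Measure ℝ} {f : ℝ → ℂ}
    (hf : Integrable f μ) {b : ι → ℂ} (hb : Summable fun i => ‖b i‖) {ω : ι → ℝ} {φ : ℝ → ℂ}
    (hφ : ∀ᵐ t : ℝ ∂μ, HasSum (fun i => b i * Complex.exp (I * (ω i * t))) (φ t)) :
    HasSum (fun i => conj (b i) * fourierWrt μ f (ω i)) (∫ t, f t * conj (φ t) ∂μ) := by
  set F : ι → ℝ → ℂ := fun i t => conj (b i) * (f t * Complex.exp (-I * (t * ω i)))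
  have hF : ∀ i, Integrable (F i) μ := fun i => (integrable_mul_exp hf (ω i)).const_mul _
  have hnorm : ∀ i, ∫ t, ‖F i t‖ ∂μ = ‖b i‖ * ∫ t, ‖f t‖ ∂μ := fun i => by
    simp only [F, norm_mul, norm_exp_neg_I_mul, mul_one, RCLike.norm_conj]
    exact integral_const_mul _ _
  have hsum := hasSum_integral_of_summable_integral_norm hF
    ((hb.mul_right (∫ t, ‖f t‖ ∂μ)).congr fun i => (hnorm i).symm)
  have hterm : ∀ i, ∫ t, F i t ∂μ = conj (b i) * fourierWrt μ f (ω i) :=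
    fun i => integral_const_mul _ _
  have hlim : ∫ t, ∑' i, F i t ∂μ = ∫ t, f t * conj (φ t) ∂μ := by
    refine integral_congr_ae (hφ.mono fun t ht => ?_)
    show ∑' i, F i t = f t * conj (φ t)
    rw [← ((ht.map (starRingEnd ℂ) continuous_conj).mul_left (f t)).tsum_eq]
    refine tsum_congr fun i => ?_
    simp only [F, Function.comp_apply, map_mul, conj_exp_I_mul]
    ring
  simp only [hterm] at hsum
  rwa [hlim] at hsum

lemma norm_tsum_conj_mul_sq_le {ι : Type*} {b c : ι → ℂ} (hb : Memℓp b 2) (hc : Memℓp c 2) :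
    ‖∑' i, conj (b i) * c i‖ ^ 2 ≤ (∑' i, ‖b i‖ ^ 2) * ∑' i, ‖c i‖ ^ 2 := by
  let B : lp (fun _ : ι => ℂ) 2 := ⟨b, hb⟩
  let C : lp (fun _ : ι => ℂ) 2 := ⟨c, hc⟩
  have hnorm : ∀ v : lp (fun _ : ι => ℂ) 2, ‖v‖ ^ 2 = ∑' i, ‖v i‖ ^ 2 := fun v => by
    simpa using lp.norm_rpow_eq_tsum (p := 2) (by norm_num) v
  have h := pow_le_pow_left₀ (norm_nonneg _) (norm_inner_le_norm (𝕜 := ℂ) B C) 2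
  rw [lp.inner_eq_tsum, mul_pow, hnorm, hnorm] at h
  simpa [mul_comm] using h

lemma norm_integral_mul_conj_sq_le {ι : Type*} [Countable ι] {μ : Measure ℝ} {f : ℝ → ℂ}
    (hf : Integrable f μ) {b : ι → ℂ} (hb : Summable fun i => ‖b i‖) {ω : ι → ℝ} {φ : ℝ → ℂ}
    (hφ : ∀ᵐ t : ℝ ∂μ, HasSum (fun i => b i * Complex.exp (I * (ω i * t))) (φ t))
    (hc : Summable fun i => ‖fourierWrt μ f (ω i)‖ ^ 2) :
    ‖∫ t, f t * conj (φ t) ∂μ‖ ^ 2 ≤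
      (∑' i, ‖b i‖ ^ 2) * ∑' i, ‖fourierWrt μ f (ω i)‖ ^ 2 := by
  rw [← (hasSum_integral_mul_conj hf hb hφ).tsum_eq]
  have hb2 : Memℓp b 2 := (memℓp_gen (p := 1) (by simpa using hb)).of_exponent_ge (by norm_num)
  exact norm_tsum_conj_mul_sq_le hb2 (memℓp_gen (by simpa using hc))

lemma hasSum_sq_norm_fourierWrt {a b : ℝ} (hab : a < b) {E : Set ℝ} (hE : MeasurableSet E)
    (hEab : E ⊆ Ioc a b) {f : ℝ → ℂ} (hf : MemLp f 2 (volume.restrict E)) :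
    HasSum (fun k : ℤ => ‖fourierWrt (volume.restrict E) f (2 * π * k / (b - a))‖ ^ 2)
      ((b - a) * ∫ t in E, ‖f t‖ ^ 2) := by
  have hL : b - a ≠ 0 := (sub_pos.2 hab).ne'
  have hg : MemLp (E.indicator f) 2 (volume.restrict (Ioc a b)) :=
    ((memLp_indicator_iff_restrict hE).2 hf).restrict _
  have hcoeff : ∀ k : ℤ, fourierCoeffOn hab (E.indicator f) k =
      (b - a)⁻¹ * fourierWrt (volume.restrict E) f (2 * π * k / (b - a)) := by
    intro k
    have hpt : ∀ x : ℝ, fourier (-k) (x : AddCircle (b - a)) • E.indicator f x =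
        E.indicator (fun t => f t * Complex.exp (-I * (t * ↑(2 * π * k / (b - a))))) x := by
      intro x
      by_cases hx : x ∈ E
      · rw [indicator_of_mem hx, indicator_of_mem hx, fourier_coe_apply, smul_eq_mul, mul_comm]
        congr 2
        push_cast
        ring
      · simp [hx]
    rw [fourierCoeffOn_eq_integral, intervalIntegral.integral_of_le hab.le]
    simp_rw [hpt, setIntegral_indicator hE, inter_eq_right.2 hEab]
    rw [fourierWrt, one_div, Complex.real_smul]
  have hnorm : ∫ x in a..b, ‖E.indicator f x‖ ^ 2 = ∫ t in E, ‖f t‖ ^ 2 := by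
    have hpt : ∀ x, ‖E.indicator f x‖ ^ 2 = E.indicator (fun t => ‖f t‖ ^ 2) x := by
      intro x; by_cases hx : x ∈ E <;> simp [hx]
    rw [intervalIntegral.integral_of_le hab.le]
    simp_rw [hpt, setIntegral_indicator hE, inter_eq_right.2 hEab]
  have h := (hasSum_sq_fourierCoeffOn hab hg).mul_left ((b - a) ^ 2)
  rw [hnorm, smul_eq_mul] at h
  have hterm : ∀ k : ℤ, (b - a) ^ 2 * ‖fourierCoeffOn hab (E.indicator f) k‖ ^ 2 =
      ‖fourierWrt (volume.restrict E) f (2 * π * k / (b - a))‖ ^ 2 := by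
    intro k
    rw [hcoeff, norm_mul, mul_pow, ← mul_assoc, Complex.norm_real, norm_inv, Real.norm_eq_abs,
      inv_pow, sq_abs, mul_inv_cancel₀ (pow_ne_zero 2 hL), one_mul]
  rwa [funext hterm, sq, mul_assoc, mul_inv_cancel_left₀ hL] at h

lemma Bornology.IsBounded.exists_subset_Ioc_nat_mul {E : Set ℝ} (hE : Bornology.IsBounded E)
    {c : ℝ} (hc : 0 < c) : ∃ N : ℕ, 0 < N ∧ E ⊆ Ioc (-(N * c)) (N * c) := by
  obtain ⟨r, hr, hEr⟩ := hE.subset_ball_lt 0 0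
  obtain ⟨N, hN⟩ := exists_nat_gt (r / c)
  have hrN : r < N * c := (div_lt_iff₀ hc).1 hN
  refine ⟨N, by exact_mod_cast (div_pos hr hc).trans hN, fun x hx => ?_⟩
  have hx' := abs_lt.1 (mem_ball_zero_iff.1 (hEr hx))
  exact ⟨by linarith [hx'.1], by linarith [hx'.2]⟩

lemma exists_tsum_sq_norm_fourierWrt_le {σ : ℝ} (hσ : 0 < σ) {E : Set ℝ} (hE : MeasurableSet E)
    (hEb : Bornology.IsBounded E) {f : ℝ → ℂ} (hf : MemLp f 2 (volume.restrict E)) :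
    ∃ C, ∀ y : ℝ,
      Summable (fun ν : ℤ => ‖fourierWrt (volume.restrict E) f (y + 2 * ν * σ)‖ ^ 2) ∧
        ∑' ν : ℤ, ‖fourierWrt (volume.restrict E) f (y + 2 * ν * σ)‖ ^ 2 ≤ C := by
  obtain ⟨N, hN, hEN⟩ := hEb.exists_subset_Ioc_nat_mul (div_pos pi_pos hσ)
  set R : ℝ := N * (π / σ)
  have hR : -R < R := neg_lt_self (by positivity)
  refine ⟨(R - -R) * ∫ t in E, ‖f t‖ ^ 2, fun y => ?_⟩
  set g : ℝ → ℂ := fun t => f t * Complex.exp (-I * (t * y))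
  have hgf : ∀ t, ‖g t‖ = ‖f t‖ := fun t => by rw [norm_mul, norm_exp_neg_I_mul, mul_one]
  have hg : MemLp g 2 (volume.restrict E) :=
    hf.of_le (hf.1.mul (Continuous.aestronglyMeasurable (by fun_prop)))
      (ae_of_all _ fun t => (hgf t).le)
  have hsum := hasSum_sq_norm_fourierWrt hR hE hEN hg
  simp only [hgf] at hsum
  have hfreq : ∀ ν : ℤ, fourierWrt (volume.restrict E) f (y + 2 * ν * σ) =
      fourierWrt (volume.restrict E) g (2 * π * ((2 * N * ν : ℤ) : ℝ) / (R - -R)) := by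
    intro ν
    simp only [fourierWrt, g, mul_assoc, ← Complex.exp_add]
    congr 1; funext t; congr 2
    have : (N : ℂ) ≠ 0 := by exact_mod_cast hN.ne'
    simp only [R]
    push_cast
    field_simp
    ring
  have hinj : Function.Injective fun ν : ℤ => 2 * (N : ℤ) * ν :=
    mul_right_injective₀ (by positivity)
  simp only [hfreq]
  exact ⟨hsum.summable.comp_injective hinj,
    (tsum_comp_le_tsum_of_inj hsum.summable (fun _ => sq_nonneg _) hinj).trans hsum.tsum_eq.le⟩

lemma lintegral_Ioc_tsum_comp_add_mul {T : ℝ} (hT : 0 < T) (a : ℝ) {q : ℝ → ℝ≥0∞}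
    (hq : Measurable q) :
    ∫⁻ y in Ioc a (a + T), ∑' n : ℤ, q (y + n * T) = ∫⁻ y, q y := by
  let e : ℤ ≃ AddSubgroup.zmultiples T :=
    Equiv.ofBijective (fun n => ⟨n • T, AddSubgroup.zsmul_mem_zmultiples T n⟩)
      ⟨fun m n h => (zsmul_left_strictMono hT).injective (congrArg Subtype.val h),
        fun ⟨x, hx⟩ => by obtain ⟨n, rfl⟩ := AddSubgroup.mem_zmultiples_iff.1 hx; exact ⟨n, rfl⟩⟩
  rw [lintegral_tsum (f := fun (n : ℤ) y => q (y + n * T))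
      fun n => (hq.comp (measurable_add_const _)).aemeasurable,
    (isAddFundamentalDomain_Ioc hT a volume).lintegral_eq_tsum'' q, ← e.tsum_eq]
  refine tsum_congr fun n => setLIntegral_congr_fun measurableSet_Ioc fun y _ => ?_
  simp [e, add_comm, zsmul_eq_mul]

lemma integral_Ioc_tsum_comp_add_two_mul {σ : ℝ} (hσ : 0 < σ) {q : ℝ → ℝ} (hq : Measurable q)
    (hq0 : ∀ y, 0 ≤ q y) (hsum : ∀ y, Summable fun ν : ℤ => q (y + 2 * ν * σ)) :
    ∫ y in Ioc (-σ) σ, ∑' ν : ℤ, q (y + 2 * ν * σ) = ∫ y, q y := by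
  have hofReal : ∀ y, ∑' ν : ℤ, ENNReal.ofReal (q (y + ν * (2 * σ))) =
      ENNReal.ofReal (∑' ν : ℤ, q (y + 2 * ν * σ)) := fun y => by
    rw [ENNReal.ofReal_tsum_of_nonneg (fun ν => hq0 _) (hsum y)]
    congr! 4
    ring
  have hIoc := lintegral_Ioc_tsum_comp_add_mul (by positivity : 0 < 2 * σ) (-σ) hq.ennreal_ofReal
  rw [show -σ + 2 * σ = σ by ring] at hIoc
  simp_rw [hofReal] at hIoc
  rw [integral_eq_lintegral_of_nonneg_ae (ae_of_all _ fun y => tsum_nonneg fun ν => hq0 _)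
      (Measurable.tsum fun ν => hq.comp (measurable_add_const _)).aestronglyMeasurable, hIoc,
    integral_eq_lintegral_of_nonneg_ae (ae_of_all _ hq0) hq.aestronglyMeasurable]

lemma ae_ae_hasSum_of_isPhiHat {Bhat : ℝ → ℂ} {σ : ℝ} {Φ : ℝ → ℝ → ℂ}
    (hΦ : IsPhiHat Bhat σ Φ) :
    ∀ᵐ y : ℝ, ∀ᵐ t : ℝ, HasSum (fun ν : ℤ =>
      Bhat (y + 2 * ν * σ) * Complex.exp (I * (↑(y + 2 * ν * σ) * t))) (Φ t y) := by
  have hswap := Measure.measurePreserving_swap.quasiMeasurePreserving.tendsto_ae.eventually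
    (show ∀ᵐ p : ℝ × ℝ ∂(volume.prod volume), _ from hΦ)
  filter_upwards [Measure.ae_ae_of_ae_prod hswap] with y hy
  filter_upwards [hy] with t ht
  simpa using ht

lemma ae_norm_setIntegral_mul_conj_sq_le {Bhat : ℝ → ℂ} {σ : ℝ} {Φ : ℝ → ℝ → ℂ}
    (hΦ : IsPhiHat Bhat σ Φ) {E : Set ℝ} {f : ℝ → ℂ} (hf : Integrable f (volume.restrict E))
    (hsum : ∀ y, Summable fun ν : ℤ => ‖fourierWrt (volume.restrict E) f (y + 2 * ν * σ)‖ ^ 2) :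
    ∀ᵐ y : ℝ, ‖∫ t in E, f t * conj (Φ t y)‖ ^ 2 ≤
      Dfun Bhat σ y * ∑' ν : ℤ, ‖fourierWrt (volume.restrict E) f (y + 2 * ν * σ)‖ ^ 2 := by
  filter_upwards [ae_ae_hasSum_of_isPhiHat hΦ] with y hy
  obtain ⟨t, ht⟩ := hy.exists
  exact norm_integral_mul_conj_sq_le hf (summable_norm_of_hasSum_mul_exp ht)
    (ae_restrict_of_ae hy) (hsum y)

/-- for every bounded measurable `E ⊆ ℝ`,
`∫_{-σ}^{σ} |∫_E f conj(Φ(·,y))|² dy ≤ ‖D_{B,σ}‖_∞ ∫_ℝ |∫_E f(t) e^{-iyt} dt|² dy`. -/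
theorem stmt19 (σ : ℝ) (hσ : 0 < σ) (f : ℝ → ℂ) (hf : MemLp f 2 volume)
    (Bhat : ℝ → ℂ)
    (hD : MemLp (fun y => Dfun Bhat σ y) ⊤ (volume.restrict (Set.Ioc (-σ) σ)))
    (Φ : ℝ → ℝ → ℂ) (hΦ : IsPhiHat Bhat σ Φ) :
    ∀ E : Set ℝ, MeasurableSet E → Bornology.IsBounded E →
      (∫ y in Set.Ioc (-σ) σ, ‖∫ t in E, f t * (starRingEnd ℂ) (Φ t y)‖ ^ 2)
        ≤ (eLpNorm (fun y => Dfun Bhat σ y) ⊤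
            (volume.restrict (Set.Ioc (-σ) σ))).toReal *
          ∫ y : ℝ, ‖∫ t in E, f t * Complex.exp (-Complex.I * (t * y))‖ ^ 2 := by
  intro E hE hEb
  have : IsFiniteMeasure (volume.restrict E) := ⟨by simpa using hEb.measure_lt_top⟩
  have hfE : MemLp f 2 (volume.restrict E) := hf.restrict E
  set F := fourierWrt (volume.restrict E) f
  set K := (eLpNorm (fun y => Dfun Bhat σ y) ⊤ (volume.restrict (Ioc (-σ) σ))).toReal
  set G : ℝ → ℝ := fun y => ∑' ν : ℤ, ‖F (y + 2 * ν * σ)‖ ^ 2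
  obtain ⟨C, hC⟩ := exists_tsum_sq_norm_fourierWrt_le hσ hE hEb hfE
  have hFc : Continuous F := continuous_fourierWrt (hfE.integrable one_le_two)
  have hG : Integrable G (volume.restrict (Ioc (-σ) σ)) :=
    Integrable.of_bound (Measurable.tsum fun ν => by fun_prop).aestronglyMeasurable C
      (ae_of_all _ fun y => by
        rw [Real.norm_of_nonneg (tsum_nonneg fun ν => sq_nonneg _)]; exact (hC y).2)
  have hpt : ∀ᵐ y ∂volume.restrict (Ioc (-σ) σ),
      ‖∫ t in E, f t * conj (Φ t y)‖ ^ 2 ≤ K * G y := by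
    filter_upwards [ae_le_lpNorm_exponent_top hD, ae_restrict_of_ae
      (ae_norm_setIntegral_mul_conj_sq_le hΦ (hfE.integrable one_le_two) fun y => (hC y).1)]
      with y hDy hy
    rw [show K = _ from toReal_eLpNorm hD.1]
    exact hy.trans (mul_le_mul_of_nonneg_right ((le_abs_self _).trans hDy)
      (tsum_nonneg fun ν => sq_nonneg _))
  calc ∫ y in Ioc (-σ) σ, ‖∫ t in E, f t * conj (Φ t y)‖ ^ 2
      ≤ ∫ y in Ioc (-σ) σ, K * G y :=
        integral_mono_of_nonneg (ae_of_all _ fun _ => sq_nonneg _) (hG.const_mul K) hpt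
    _ = K * ∫ y, ‖F y‖ ^ 2 := by
        rw [integral_const_mul, integral_Ioc_tsum_comp_add_two_mul (q := fun y => ‖F y‖ ^ 2) hσ
          (hFc.norm.pow 2).measurable
          (fun _ => sq_nonneg _) fun y => (hC y).1]
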